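/- Let σ, τ > -1/2 with σ ≠ τ and τ - σ not a negative integer, and let s > 0, v = τ - σ. For naturals m ≤ n define ĉ_{2m,2n} = (-1)^{m+n} s^{v/2} √(n! Γ(m+1/2+σ)/(m! Γ(n+1/2+τ))) Γ(n-m+v)/((n-m)! Γ(v)). Then for n > 0, ĉ_{0,2n} = v/√n Σ_{j=0}^{n-1} (-1)^{n-j} √((n-1)! Γ(j+1/2+τ)/(j! Γ(n+1/2+τ))) ĉ_{0,2j}. -/

import Mathlib

/-- The mixed scalar product coefficients `ĉ_{2m,2n}` in the case `σ = θ ≠ τ`,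
given by the closed formula of Proposition 4.7 with `v = τ - σ`. -/
noncomputable def chatEE (σ τ s : ℝ) (m n : ℕ) : ℝ :=
  (-1 : ℝ) ^ (m + n) * s ^ ((τ - σ) / 2) *
    Real.sqrt ((n.factorial : ℝ) * Real.Gamma ((m : ℝ) + 1/2 + σ) /
      ((m.factorial : ℝ) * Real.Gamma ((n : ℝ) + 1/2 + τ))) *
    Real.Gamma ((n : ℝ) - (m : ℝ) + (τ - σ)) /
      (((n - m).factorial : ℝ) * Real.Gamma (τ - σ))

private lemma gamma_sum_aux (v : ℝ) (hv : ∀ k : ℕ, (k : ℝ) + v ≠ 0) (n : ℕ) :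
    v * ∑ j ∈ Finset.range (n + 1), Real.Gamma ((j : ℝ) + v) / (j.factorial : ℝ)
      = Real.Gamma ((n : ℝ) + 1 + v) / (n.factorial : ℝ) := by
  induction n with
  | zero =>
      simp only [Finset.range_one, Finset.sum_singleton, Nat.cast_zero, Nat.factorial_zero,
        Nat.cast_one, zero_add, div_one]
      rw [show (1 : ℝ) + v = v + 1 by ring, Real.Gamma_add_one (by simpa using hv 0)]
  | succ n ih =>
      rw [Finset.sum_range_succ, mul_add, ih]
      have hne : ((n : ℝ) + 1 + v) ≠ 0 := by
        have := hv (n + 1); push_cast at this; exact this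
      have h0 : (n.factorial : ℝ) ≠ 0 := Nat.cast_ne_zero.mpr n.factorial_ne_zero
      push_cast [Nat.factorial_succ]
      rw [show ((n : ℝ) + 1 + 1 + v) = ((n : ℝ) + 1 + v) + 1 by ring,
        Real.Gamma_add_one hne]
      field_simp

theorem chat_recursion (σ τ s : ℝ) (hσ : -1/2 < σ) (hτ : -1/2 < τ) (hne : σ ≠ τ)
    (hv : ∀ k : ℕ, τ - σ ≠ -((k : ℝ) + 1)) (hs : 0 < s) :
    ∀ n : ℕ, 0 < n →
      chatEE σ τ s 0 n
        = (τ - σ) / Real.sqrt (n : ℝ) *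
            ∑ j ∈ Finset.range n, (-1 : ℝ) ^ (n - j) *
              Real.sqrt (((n - 1).factorial : ℝ) * Real.Gamma ((j : ℝ) + 1/2 + τ) /
                ((j.factorial : ℝ) * Real.Gamma ((n : ℝ) + 1/2 + τ))) *
              chatEE σ τ s 0 j := by
  intro n hn
  obtain ⟨k, rfl⟩ : ∃ k, n = k + 1 := ⟨n - 1, (Nat.succ_pred_eq_of_pos hn).symm⟩
  have hv0 : τ - σ ≠ 0 := sub_ne_zero.mpr (Ne.symm hne)
  have hv' : ∀ m : ℕ, (m : ℝ) + (τ - σ) ≠ 0 := by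
    intro m
    cases m with
    | zero => simpa using hv0
    | succ m =>
        intro h
        exact hv m (by push_cast at h ⊢; linarith)
  have hΓσ : 0 < Real.Gamma (1/2 + σ) := Real.Gamma_pos_of_pos (by linarith)
  have hΓτ : ∀ j : ℕ, 0 < Real.Gamma ((j : ℝ) + 1/2 + τ) := fun j =>
    Real.Gamma_pos_of_pos (by have := Nat.cast_nonneg (α := ℝ) j; linarith)
  have hΓv : Real.Gamma (τ - σ) ≠ 0 := by
    apply Real.Gamma_ne_zero
    intro m
    cases m with
    | zero => simpa using hv0
    | succ m => intro h; exact hv m (by push_cast at h ⊢; linarith)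
  have hfac : ∀ j : ℕ, (0 : ℝ) < (j.factorial : ℝ) := fun j =>
    Nat.cast_pos.mpr j.factorial_pos
  have hterm : ∀ j ∈ Finset.range (k + 1),
      (-1 : ℝ) ^ (k + 1 - j) *
        Real.sqrt (((k + 1 - 1).factorial : ℝ) * Real.Gamma ((j : ℝ) + 1/2 + τ) /
          ((j.factorial : ℝ) * Real.Gamma (((k + 1 : ℕ) : ℝ) + 1/2 + τ))) *
        chatEE σ τ s 0 j
      = (-1 : ℝ) ^ (k + 1) * s ^ ((τ - σ) / 2) *
          Real.sqrt ((k.factorial : ℝ) * Real.Gamma (1/2 + σ) /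
            Real.Gamma (((k + 1 : ℕ) : ℝ) + 1/2 + τ)) / Real.Gamma (τ - σ) *
          (Real.Gamma ((j : ℝ) + (τ - σ)) / (j.factorial : ℝ)) := by
    intro j hj
    have hjk : j ≤ k := Nat.lt_succ_iff.mp (Finset.mem_range.mp hj)
    simp only [chatEE, Nat.cast_zero, Nat.factorial_zero, Nat.cast_one, zero_add,
      Nat.sub_zero, sub_zero, one_mul, Nat.add_sub_cancel]
    have hsq : Real.sqrt ((k.factorial : ℝ) * Real.Gamma (1/2 + σ) /
          Real.Gamma (((k + 1 : ℕ) : ℝ) + 1/2 + τ))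
        = Real.sqrt ((k.factorial : ℝ) * Real.Gamma ((j : ℝ) + 1/2 + τ) /
            ((j.factorial : ℝ) * Real.Gamma (((k + 1 : ℕ) : ℝ) + 1/2 + τ))) *
          Real.sqrt ((j.factorial : ℝ) * Real.Gamma (1/2 + σ) /
            Real.Gamma ((j : ℝ) + 1/2 + τ)) := by
      rw [← Real.sqrt_mul (div_nonneg (mul_nonneg (hfac k).le (hΓτ j).le)
        (mul_nonneg (hfac j).le (hΓτ (k + 1)).le))]
      rw [div_mul_div_comm,
        show (k.factorial : ℝ) * Real.Gamma ((j : ℝ) + 1/2 + τ) *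
            ((j.factorial : ℝ) * Real.Gamma (1/2 + σ)) =
          (k.factorial : ℝ) * Real.Gamma (1/2 + σ) *
            ((j.factorial : ℝ) * Real.Gamma ((j : ℝ) + 1/2 + τ)) from by ring,
        show (j.factorial : ℝ) * Real.Gamma (((k + 1 : ℕ) : ℝ) + 1/2 + τ) *
            Real.Gamma ((j : ℝ) + 1/2 + τ) =
          Real.Gamma (((k + 1 : ℕ) : ℝ) + 1/2 + τ) *
            ((j.factorial : ℝ) * Real.Gamma ((j : ℝ) + 1/2 + τ)) from by ring,
        mul_div_mul_right _ _ (mul_ne_zero (hfac j).ne' (hΓτ j).ne')]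
    have hsign : (-1 : ℝ) ^ (k + 1) = (-1 : ℝ) ^ (k + 1 - j) * (-1 : ℝ) ^ j := by
      rw [← pow_add, Nat.sub_add_cancel (by omega)]
    rw [hsq, hsign]
    ring
  rw [Finset.sum_congr rfl hterm, ← Finset.mul_sum]
  have hsum := gamma_sum_aux (τ - σ) hv' k
  have hfk : (k.factorial : ℝ) ≠ 0 := (hfac k).ne'
  have hsum' : ∑ j ∈ Finset.range (k + 1),
      Real.Gamma ((j : ℝ) + (τ - σ)) / (j.factorial : ℝ)
      = Real.Gamma ((k : ℝ) + 1 + (τ - σ)) / ((τ - σ) * (k.factorial : ℝ)) := by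
    field_simp at hsum ⊢
    linarith [hsum]
  rw [hsum']
  simp only [chatEE, Nat.cast_zero, Nat.factorial_zero, Nat.cast_one, zero_add,
    Nat.sub_zero, sub_zero, one_mul]
  have hkpos : (0 : ℝ) < (k : ℝ) + 1 := by positivity
  have hfsucc : (((k + 1).factorial : ℕ) : ℝ) = ((k : ℝ) + 1) * (k.factorial : ℝ) := by
    push_cast [Nat.factorial_succ]; ring
  have hsplit : Real.sqrt (((k + 1).factorial : ℝ) * Real.Gamma (1/2 + σ) /
        Real.Gamma (((k + 1 : ℕ) : ℝ) + 1/2 + τ))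
      = Real.sqrt ((k : ℝ) + 1) *
        Real.sqrt ((k.factorial : ℝ) * Real.Gamma (1/2 + σ) /
          Real.Gamma (((k + 1 : ℕ) : ℝ) + 1/2 + τ)) := by
    rw [← Real.sqrt_mul hkpos.le]
    rw [hfsucc]
    congr 1
    ring
  rw [hsplit, hfsucc]
  have hcast1 : (((k + 1 : ℕ) : ℝ)) = (k : ℝ) + 1 := by push_cast; ring
  have hcastG : Real.Gamma (((k + 1 : ℕ) : ℝ) + (τ - σ))
      = Real.Gamma ((k : ℝ) + 1 + (τ - σ)) := by rw [hcast1]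
  rw [hcastG, show Real.sqrt (((k + 1 : ℕ) : ℝ)) = Real.sqrt ((k : ℝ) + 1) by rw [hcast1]]
  have hr : Real.sqrt ((k : ℝ) + 1) * Real.sqrt ((k : ℝ) + 1) = (k : ℝ) + 1 :=
    Real.mul_self_sqrt hkpos.le
  have hrne : Real.sqrt ((k : ℝ) + 1) ≠ 0 := by positivity
  field_simp
  rw [Real.sq_sqrt hkpos.le]
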